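/- arXiv:2603.23302 — 2 statements merged into one kernel-verified Lean document; each statement's English description precedes it below -/
import Mathlib

section
/- Let X and ε be independent real random variables that are sub-Gaussian with parameters B₁ and B₂ respectively, i.e. E[exp(λX)] ≤ exp(λ²B₁²/2) and E[exp(λε)] ≤ exp(λ²B₂²/2) for all λ ∈ ℝ. Then for any β > 0, E[|εX| · 1{|εX| > β}] ≤ 8 B₁ B₂ exp(−β/(2B₁B₂)). -/
/-!
Write `a = B₁ B₂`. Averaging `exp (g ε)` over a centred Gaussian `g` of variance `2 s` turns the
mgf bound of `ε` into `E[exp (s ε²)] ≤ (1 - 2 s B₂²)^(-1/2)`; conditioning on `ε` then gives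
`E[exp (t ε X)] ≤ (1 - t² a²)^(-1/2)`, hence `E[exp (4 |εX| / (5a))] ≤ 10/3`. The theorem follows
from the pointwise bound `y · 1{y > β} ≤ (10 a / (3 e)) exp (-β / (2a)) exp (4 y / (5a))`
and `100 / (9 e) ≤ 8`.
-/

open MeasureTheory Real ProbabilityTheory
open scoped NNReal ENNReal

namespace ProbabilityTheory

lemma lintegral_exp_mul_gaussianReal (m : ℝ) (v : ℝ≥0) (t : ℝ) :
    ∫⁻ x, ENNReal.ofReal (exp (t * x)) ∂gaussianReal m v
      = ENNReal.ofReal (exp (m * t + v * t ^ 2 / 2)) := by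
  rw [← ofReal_integral_eq_lintegral_ofReal (integrable_exp_mul_gaussianReal t)
    (ae_of_all _ fun _ ↦ (exp_pos _).le), ← congrFun mgf_id_gaussianReal]
  rfl

lemma lintegral_exp_mul_sq_gaussianReal (v : ℝ≥0) {r : ℝ} (hr : 2 * r * v < 1) :
    ∫⁻ x, ENNReal.ofReal (exp (r * x ^ 2)) ∂gaussianReal 0 v
      = ENNReal.ofReal (√(1 - 2 * r * v))⁻¹ := by
  rcases eq_or_ne v 0 with rfl | hv
  · simp [gaussianReal_zero_var]
  have hb : 0 < 1 / (2 * v) - r := by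
    rw [lt_sub_iff_add_lt, lt_div_iff₀ (by positivity)]; linarith
  have hpdf (x : ℝ) : gaussianPDFReal 0 v x * exp (r * x ^ 2)
      = (√(2 * π * v))⁻¹ * exp (-(1 / (2 * v) - r) * x ^ 2) := by
    rw [gaussianPDFReal, mul_assoc, ← exp_add]; congr 2; ring
  rw [gaussianReal_of_var_ne_zero _ hv, lintegral_withDensity_eq_lintegral_mul _
    (measurable_gaussianPDF _ _) (by fun_prop)]
  simp only [Pi.mul_apply, gaussianPDF, ← ENNReal.ofReal_mul (gaussianPDFReal_nonneg _ _ _), hpdf]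
  rw [← ofReal_integral_eq_lintegral_ofReal ((integrable_exp_neg_mul_sq hb).const_mul _)
    (ae_of_all _ fun _ ↦ by positivity), integral_const_mul, integral_gaussian]
  have hvar : π / (1 / (2 * v) - r) = 2 * π * v / (1 - 2 * r * v) := by field_simp
  rw [hvar, sqrt_div' _ (by linarith), ← div_eq_inv_mul, div_div_cancel_left' (by positivity)]

end ProbabilityTheory

lemma ite_lt_le_exp_mul_exp {s t : ℝ} (hs : 0 ≤ s) (ht : 0 < t) (β y : ℝ) :
    (if β < y then y else 0) ≤ exp (-(s * β) - 1) / t * exp ((s + t) * y) := by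
  split_ifs with hβy
  · have hy : y ≤ exp (t * y - 1) / t := by
      rw [le_div_iff₀ ht]; linarith [add_one_le_exp (t * y - 1)]
    have hβ : 1 ≤ exp (s * (y - β)) := one_le_exp (by nlinarith)
    calc y ≤ exp (t * y - 1) / t * exp (s * (y - β)) :=
          hy.trans (le_mul_of_one_le_right (by positivity) hβ)
      _ = exp (-(s * β) - 1) / t * exp ((s + t) * y) := by
        rw [div_mul_eq_mul_div, div_mul_eq_mul_div, ← exp_add, ← exp_add]; ring_nf
  · positivity

section

variable {Ω : Type*} {mΩ : MeasurableSpace Ω} {μ : Measure Ω}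

lemma integral_le_toReal_lintegral_ofReal {f : Ω → ℝ} (hf : ∀ ω, 0 ≤ f ω) :
    ∫ ω, f ω ∂μ ≤ (∫⁻ ω, ENNReal.ofReal (f ω) ∂μ).toReal := by
  refine (Real.le_norm_self _).trans ((norm_integral_le_lintegral_norm _).trans_eq ?_)
  simp only [Real.norm_of_nonneg (hf _)]

lemma lintegral_ite_lt_le_mul_lintegral_exp (Z : Ω → ℝ) {s t : ℝ} (hs : 0 ≤ s) (ht : 0 < t)
    (β : ℝ) :
    ∫⁻ ω, ENNReal.ofReal (if β < Z ω then Z ω else 0) ∂μ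
      ≤ ENNReal.ofReal (exp (-(s * β) - 1) / t)
        * ∫⁻ ω, ENNReal.ofReal (exp ((s + t) * Z ω)) ∂μ := by
  rw [← lintegral_const_mul' _ _ ENNReal.ofReal_ne_top]
  gcongr with ω
  rw [← ENNReal.ofReal_mul (by positivity)]
  exact ENNReal.ofReal_le_ofReal (ite_lt_le_exp_mul_exp hs ht β (Z ω))

end

namespace ProbabilityTheory.HasSubgaussianMGF

variable {Ω : Type*} {mΩ : MeasurableSpace Ω} {μ : Measure Ω} {X Y : Ω → ℝ} {c cX cY : ℝ≥0}

lemma lintegral_exp_mul_le (h : HasSubgaussianMGF X c μ) (t : ℝ) :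
    ∫⁻ ω, ENNReal.ofReal (exp (t * X ω)) ∂μ ≤ ENNReal.ofReal (exp (c * t ^ 2 / 2)) := by
  rw [← ofReal_integral_eq_lintegral_ofReal (h.integrable_exp_mul t)
    (ae_of_all _ fun _ ↦ (exp_pos _).le)]
  exact ENNReal.ofReal_le_ofReal (h.mgf_le t)

lemma lintegral_exp_mul_sq_le [SFinite μ] (h : HasSubgaussianMGF X c μ) {s : ℝ} (hs : 0 ≤ s)
    (hsc : 2 * s * c < 1) :
    ∫⁻ ω, ENNReal.ofReal (exp (s * X ω ^ 2)) ∂μ ≤ ENNReal.ofReal (√(1 - 2 * s * c))⁻¹ := by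
  set v : ℝ≥0 := ⟨2 * s, by positivity⟩
  have hv : (v : ℝ) = 2 * s := rfl
  have hexp (x : ℝ) : ENNReal.ofReal (exp (s * x ^ 2))
      = ∫⁻ g, ENNReal.ofReal (exp (x * g)) ∂gaussianReal 0 v := by
    rw [lintegral_exp_mul_gaussianReal, hv]; ring_nf
  calc ∫⁻ ω, ENNReal.ofReal (exp (s * X ω ^ 2)) ∂μ
      = ∫⁻ g, ∫⁻ ω, ENNReal.ofReal (exp (g * X ω)) ∂μ ∂gaussianReal 0 v := by
        simp_rw [hexp, mul_comm _ (X _)]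
        exact lintegral_lintegral_swap (by have := h.aemeasurable; fun_prop)
    _ ≤ ∫⁻ g, ENNReal.ofReal (exp ((c / 2) * g ^ 2)) ∂gaussianReal 0 v := by
        gcongr with g
        convert h.lintegral_exp_mul_le g using 3; ring
    _ = ENNReal.ofReal (√(1 - 2 * s * c))⁻¹ := by
        rw [lintegral_exp_mul_sq_gaussianReal _ (by rw [hv]; linarith), hv]
        ring_nf

lemma lintegral_exp_mul_mul_le [IsFiniteMeasure μ] (hX : HasSubgaussianMGF X cX μ)
    (hY : HasSubgaussianMGF Y cY μ) (hXY : IndepFun X Y μ) {t : ℝ} (ht : t ^ 2 * cX * cY < 1) :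
    ∫⁻ ω, ENNReal.ofReal (exp (t * (X ω * Y ω))) ∂μ
      ≤ ENNReal.ofReal (√(1 - t ^ 2 * cX * cY))⁻¹ := by
  have hmX := hX.aemeasurable
  have hmY := hY.aemeasurable
  have hmap := (indepFun_iff_map_prod_eq_prod_map_map hmX hmY).1 hXY
  have hF : Measurable fun p : ℝ × ℝ ↦ ENNReal.ofReal (exp (t * (p.1 * p.2))) := by fun_prop
  calc ∫⁻ ω, ENNReal.ofReal (exp (t * (X ω * Y ω))) ∂μ
      = ∫⁻ y, ∫⁻ x, ENNReal.ofReal (exp (t * (x * y))) ∂μ.map X ∂μ.map Y := by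
        rw [← lintegral_map' hF.aemeasurable (hmX.prodMk hmY), hmap,
          lintegral_prod_symm _ hF.aemeasurable]
    _ ≤ ∫⁻ y, ENNReal.ofReal (exp ((cX * t ^ 2 / 2) * y ^ 2)) ∂μ.map Y := by
        gcongr with y
        convert ((id_map_iff hmX).2 hX).lintegral_exp_mul_le (t * y) using 3
        · simp only [id, mul_comm, mul_left_comm]
        · ring
    _ ≤ ENNReal.ofReal (√(1 - t ^ 2 * cX * cY))⁻¹ := by
        convert ((id_map_iff hmY).2 hY).lintegral_exp_mul_sq_le
          (s := cX * t ^ 2 / 2) (by positivity) (by linarith) using 4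
        · rfl
        · ring

lemma lintegral_exp_mul_abs_mul_le [IsFiniteMeasure μ] (hX : HasSubgaussianMGF X cX μ)
    (hY : HasSubgaussianMGF Y cY μ) (hXY : IndepFun X Y μ) {t : ℝ} (ht : t ^ 2 * cX * cY < 1) :
    ∫⁻ ω, ENNReal.ofReal (exp (t * |X ω * Y ω|)) ∂μ
      ≤ 2 * ENNReal.ofReal (√(1 - t ^ 2 * cX * cY))⁻¹ := by
  have := hX.aemeasurable
  have := hY.aemeasurable
  calc ∫⁻ ω, ENNReal.ofReal (exp (t * |X ω * Y ω|)) ∂μ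
      ≤ ∫⁻ ω, (ENNReal.ofReal (exp (t * (X ω * Y ω)))
          + ENNReal.ofReal (exp (-t * (X ω * Y ω)))) ∂μ := by
        gcongr with ω
        rw [← ENNReal.ofReal_add (exp_pos _).le (exp_pos _).le]
        gcongr
        rcases abs_choice (X ω * Y ω) with h | h <;> rw [h]
        · linarith [exp_pos (-t * (X ω * Y ω))]
        · rw [mul_neg, ← neg_mul]; linarith [exp_pos (t * (X ω * Y ω))]
    _ ≤ _ := by
        rw [two_mul, lintegral_add_left' (by fun_prop)]
        gcongr
        · exact lintegral_exp_mul_mul_le hX hY hXY ht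
        · have := lintegral_exp_mul_mul_le hX hY hXY (t := -t) (by rwa [neg_sq])
          rwa [neg_sq] at this

theorem integral_ite_lt_abs_mul_le [IsFiniteMeasure μ]
    (hX : HasSubgaussianMGF X cX μ) (hY : HasSubgaussianMGF Y cY μ) (hXY : IndepFun X Y μ)
    (hc : 0 < cX * cY) (β : ℝ) :
    ∫ ω, (if β < |X ω * Y ω| then |X ω * Y ω| else 0) ∂μ
      ≤ 8 * √(cX * cY) * exp (-β / (2 * √(cX * cY))) := by
  set a := √(cX * cY : ℝ)
  have ha : 0 < a := sqrt_pos.2 (mod_cast hc)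
  have ha_sq : a ^ 2 = cX * cY := sq_sqrt (by positivity)
  -- `s = 1 / (2a)` produces the decay `exp (-β / (2a))`; `t = 3 / (10a)` makes `(s + t)² a² = 16/25`.
  have hmgf : ∫⁻ ω, ENNReal.ofReal (exp ((1 / (2 * a) + 3 / (10 * a)) * |X ω * Y ω|)) ∂μ
      ≤ ENNReal.ofReal (10 / 3) := by
    have ht : (1 / (2 * a) + 3 / (10 * a)) ^ 2 * cX * cY = 16 / 25 := by
      rw [mul_assoc, ← ha_sq]; field_simp; ring
    convert hX.lintegral_exp_mul_abs_mul_le hY hXY (by rw [ht]; norm_num) using 1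
    rw [ht, show (1 : ℝ) - 16 / 25 = (3 / 5) ^ 2 by norm_num, sqrt_sq (by norm_num),
      ← ENNReal.ofReal_ofNat 2, ← ENNReal.ofReal_mul (by norm_num)]
    norm_num
  have hK : 0 ≤ exp (-(1 / (2 * a) * β) - 1) / (3 / (10 * a)) := by positivity
  calc ∫ ω, (if β < |X ω * Y ω| then |X ω * Y ω| else 0) ∂μ
      ≤ (∫⁻ ω, ENNReal.ofReal (if β < |X ω * Y ω| then |X ω * Y ω| else 0) ∂μ).toReal :=
        integral_le_toReal_lintegral_ofReal fun ω ↦ by split_ifs <;> positivity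
    _ ≤ exp (-(1 / (2 * a) * β) - 1) / (3 / (10 * a)) * (10 / 3) := by
        refine ENNReal.toReal_le_of_le_ofReal (by positivity) ?_
        grw [lintegral_ite_lt_le_mul_lintegral_exp _ (s := 1 / (2 * a)) (t := 3 / (10 * a))
          (by positivity) (by positivity), hmgf, ENNReal.ofReal_mul hK]
    _ = 100 / 9 * exp (-1) * a * exp (-β / (2 * a)) := by
        rw [sub_eq_add_neg, exp_add]; field_simp; ring_nf
    _ ≤ 8 * a * exp (-β / (2 * a)) := by
        have he : exp (-1) ≤ 1 / 2 := by
          rw [exp_neg, inv_le_comm₀ (exp_pos 1) (by norm_num)]; linarith [add_one_le_exp 1]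
        gcongr
        linarith

end ProbabilityTheory.HasSubgaussianMGF

theorem truncation_product_subGaussian_general {Ω : Type*} [MeasureSpace Ω]
    [IsProbabilityMeasure (volume : Measure Ω)]
    (X ε : Ω → ℝ) (B₁ B₂ : ℝ) (hB₁ : 0 < B₁) (hB₂ : 0 < B₂)
    (hindep : IndepFun X ε)
    (hX : ∀ l : ℝ, ∫ ω, Real.exp (l * X ω) ≤ Real.exp (l ^ 2 * B₁ ^ 2 / 2))
    (hε : ∀ l : ℝ, ∫ ω, Real.exp (l * ε ω) ≤ Real.exp (l ^ 2 * B₂ ^ 2 / 2))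
    (hIntX : ∀ l : ℝ, Integrable (fun ω => Real.exp (l * X ω)))
    (hIntε : ∀ l : ℝ, Integrable (fun ω => Real.exp (l * ε ω)))
    (β : ℝ) :
    ∫ ω, (if β < |ε ω * X ω| then |ε ω * X ω| else 0)
      ≤ 8 * B₁ * B₂ * Real.exp (-β / (2 * B₁ * B₂)) := by
  set c₁ : ℝ≥0 := ⟨B₁ ^ 2, sq_nonneg _⟩
  set c₂ : ℝ≥0 := ⟨B₂ ^ 2, sq_nonneg _⟩
  have hc₁ : (c₁ : ℝ) = B₁ ^ 2 := rfl
  have hc₂ : (c₂ : ℝ) = B₂ ^ 2 := rfl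
  have hX' : HasSubgaussianMGF X c₁ := ⟨hIntX, fun l ↦ (hX l).trans_eq (by rw [hc₁]; ring_nf)⟩
  have hε' : HasSubgaussianMGF ε c₂ := ⟨hIntε, fun l ↦ (hε l).trans_eq (by rw [hc₂]; ring_nf)⟩
  have hc : √(c₂ * c₁ : ℝ) = B₁ * B₂ := by
    rw [hc₁, hc₂, ← mul_pow, sqrt_sq (by positivity), mul_comm]
  have hc_pos : 0 < c₂ * c₁ := by
    rw [← NNReal.coe_pos, NNReal.coe_mul, hc₁, hc₂]; positivity
  simpa only [hc, ← mul_assoc] using hε'.integral_ite_lt_abs_mul_le hX' hindep.symm hc_pos β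

/-- If `X` and `ε` are independent sub-Gaussian random variables with
parameters `B₁` and `B₂`, then
`E[|εX| · 1{|εX| > β}] ≤ 8 B₁ B₂ exp(−β/(2B₁B₂))`. -/
theorem truncation_product_subGaussian {Ω : Type*} [MeasureSpace Ω]
    [IsProbabilityMeasure (volume : Measure Ω)]
    (X ε : Ω → ℝ) (B₁ B₂ : ℝ) (hB₁ : 0 < B₁) (hB₂ : 0 < B₂)
    (hmX : Measurable X) (hmε : Measurable ε)
    (hindep : IndepFun X ε)
    (hX : ∀ l : ℝ, ∫ ω, Real.exp (l * X ω) ≤ Real.exp (l ^ 2 * B₁ ^ 2 / 2))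
    (hε : ∀ l : ℝ, ∫ ω, Real.exp (l * ε ω) ≤ Real.exp (l ^ 2 * B₂ ^ 2 / 2))
    (hIntX : ∀ l : ℝ, Integrable (fun ω => Real.exp (l * X ω)))
    (hIntε : ∀ l : ℝ, Integrable (fun ω => Real.exp (l * ε ω)))
    (β : ℝ) (hβ : 0 < β) :
    ∫ ω, (if β < |ε ω * X ω| then |ε ω * X ω| else 0)
      ≤ 8 * B₁ * B₂ * Real.exp (-β / (2 * B₁ * B₂)) :=
  truncation_product_subGaussian_general X ε B₁ B₂ hB₁ hB₂ hindep hX hε hIntX hIntε β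
end

section
/- Let φ : [r*, ∞) → [0, ∞) be such that r ↦ φ(r)/√r is nonincreasing on [r*, ∞) (a sub-root function), and let s > 1. Then for any r ≥ r*, φ(r) + ∑_{l=1}^{∞} φ(sˡ r)/(s^{l−1} + 1) ≤ φ(r) · (1 + √s · (1/2 + 1/(√s − 1))). Moreover, the function s ↦ 1 + √s·(1/2 + 1/(√s−1)) attains the value (5 + 2√2)/2 at s = 3 + 2√2, and (5+2√2)/2 ≤ 4. -/
open Real

private lemma sqrt_pow_aux (x : ℝ) (hx : 0 ≤ x) (n : ℕ) :
    Real.sqrt (x ^ n) = Real.sqrt x ^ n := by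
  have h : (Real.sqrt x ^ n) ^ 2 = x ^ n := by
    rw [← pow_mul, mul_comm, pow_mul, Real.sq_sqrt hx]
  rw [← h, Real.sqrt_sq (pow_nonneg (Real.sqrt_nonneg x) n)]

/-- Geometric-series bound for sub-root functions via the peeling device. -/
theorem subroot_peeling_bound (rs : ℝ) (hrs : 0 < rs) (φ : ℝ → ℝ)
    (hnonneg : ∀ r, rs ≤ r → 0 ≤ φ r)
    (hmono : ∀ a b, rs ≤ a → a ≤ b → φ a ≤ φ b)
    (hsubroot : ∀ a b, rs ≤ a → a ≤ b →
      φ b / Real.sqrt b ≤ φ a / Real.sqrt a)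
    (s : ℝ) (hs : 1 < s) :
    (∀ r, rs ≤ r →
      φ r + ∑' l : ℕ, φ (s ^ (l + 1) * r) / (s ^ l + 1)
        ≤ φ r * (1 + Real.sqrt s * (1 / 2 + 1 / (Real.sqrt s - 1))))
    ∧ 1 + Real.sqrt (3 + 2 * Real.sqrt 2) *
        (1 / 2 + 1 / (Real.sqrt (3 + 2 * Real.sqrt 2) - 1))
        = (5 + 2 * Real.sqrt 2) / 2
    ∧ (5 + 2 * Real.sqrt 2) / 2 ≤ 4 := by
  have hs0 : (0:ℝ) < s := lt_trans one_pos hs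
  set q := Real.sqrt s with hqdef
  have hq1 : 1 < q := by
    rw [hqdef, show (1:ℝ) = Real.sqrt 1 from Real.sqrt_one.symm]
    exact Real.sqrt_lt_sqrt (by norm_num) hs
  have hq0 : (0:ℝ) < q := lt_trans one_pos hq1
  have hqsq : q ^ 2 = s := Real.sq_sqrt hs0.le
  have h2 : Real.sqrt 2 ^ 2 = 2 := Real.sq_sqrt (by norm_num)
  have h2pos : (0:ℝ) < Real.sqrt 2 := Real.sqrt_pos.mpr (by norm_num)
  refine ⟨?_, ?_, ?_⟩
  · intro r hr
    have hr0 : (0:ℝ) < r := lt_of_lt_of_le hrs hr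
    have hφr : 0 ≤ φ r := hnonneg r hr
    set f : ℕ → ℝ := fun l => φ (s ^ (l + 1) * r) / (s ^ l + 1) with hf
    set h : ℕ → ℝ := fun l => φ r * q * (q⁻¹) ^ l with hhdef
    have hx1 : q⁻¹ < 1 := inv_lt_one_of_one_lt₀ hq1
    have hx0 : (0:ℝ) < q⁻¹ := inv_pos.mpr hq0
    have hsummh : Summable h := by
      apply Summable.mul_left
      exact summable_geometric_of_lt_one hx0.le hx1
    -- key pointwise bound φ(s^(l+1) r) ≤ q^(l+1) φ r
    have key : ∀ l : ℕ, φ (s ^ (l + 1) * r) ≤ q ^ (l + 1) * φ r := by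
      intro l
      have hsl : (1:ℝ) ≤ s ^ (l + 1) := one_le_pow₀ hs.le
      have hb : r ≤ s ^ (l + 1) * r := le_mul_of_one_le_left hr0.le hsl
      have hdiv := hsubroot r (s ^ (l + 1) * r) hr hb
      have hsb : Real.sqrt (s ^ (l + 1) * r) = q ^ (l + 1) * Real.sqrt r := by
        rw [Real.sqrt_mul (by positivity), sqrt_pow_aux s hs0.le]
      have hsr : (0:ℝ) < Real.sqrt r := Real.sqrt_pos.mpr hr0
      have hsbpos : (0:ℝ) < Real.sqrt (s ^ (l + 1) * r) := Real.sqrt_pos.mpr (by positivity)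
      rw [div_le_div_iff₀ hsbpos hsr] at hdiv
      rw [hsb] at hdiv
      have hq' : (0:ℝ) < q ^ (l + 1) := by positivity
      calc φ (s ^ (l + 1) * r) = φ (s ^ (l + 1) * r) * Real.sqrt r / Real.sqrt r := by
            field_simp
        _ ≤ φ r * (q ^ (l + 1) * Real.sqrt r) / Real.sqrt r := by
            apply div_le_div_of_nonneg_right hdiv hsr.le
        _ = q ^ (l + 1) * φ r := by field_simp
    have hfnn : ∀ l, 0 ≤ f l := by
      intro l
      apply div_nonneg
      · apply hnonneg
        exact le_trans hr (le_mul_of_one_le_left hr0.le (one_le_pow₀ hs.le))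
      · positivity
    have hfh : ∀ l, f l ≤ h l := by
      intro l
      have hsl0 : (0:ℝ) < s ^ l := by positivity
      have hd : s ^ l ≤ s ^ l + 1 := by linarith
      calc f l ≤ q ^ (l + 1) * φ r / (s ^ l + 1) := by
            apply div_le_div_of_nonneg_right (key l) (by positivity)
        _ ≤ q ^ (l + 1) * φ r / s ^ l :=
            div_le_div_of_nonneg_left (by positivity) hsl0 hd
        _ = h l := by
            have : s ^ l = q ^ (2 * l) := by rw [← hqsq, ← pow_mul]
            rw [this, hhdef]
            simp only
            rw [inv_pow]
            field_simp
            ring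
    have hsummf : Summable f := Summable.of_nonneg_of_le hfnn hfh hsummh
    have htail : ∑' l : ℕ, f (l + 1) ≤ φ r * q * (1 / (q - 1)) := by
      have hsum1 : Summable (fun l => f (l + 1)) := (summable_nat_add_iff 1).mpr hsummf
      have hsum2 : Summable (fun l => h (l + 1)) := (summable_nat_add_iff 1).mpr hsummh
      calc ∑' l : ℕ, f (l + 1) ≤ ∑' l : ℕ, h (l + 1) :=
            Summable.tsum_le_tsum (fun l => hfh (l + 1)) hsum1 hsum2
        _ = φ r * q * (1 / (q - 1)) := by
            have : ∀ l : ℕ, h (l + 1) = (φ r * q * q⁻¹) * (q⁻¹) ^ l := by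
              intro l; rw [hhdef]; simp only; ring
            rw [tsum_congr this, tsum_mul_left,
              tsum_geometric_of_lt_one hx0.le hx1]
            have hq1' : q - 1 ≠ 0 := by intro hc; nlinarith
            field_simp
    have hf0 : f 0 ≤ q * φ r / 2 := by
      have : f 0 = φ (s ^ 1 * r) / 2 := by rw [hf]; norm_num
      rw [this]
      apply div_le_div_of_nonneg_right _ (by norm_num)
      simpa using key 0
    have hsplit : ∑' l : ℕ, f l = f 0 + ∑' l : ℕ, f (l + 1) :=
      Summable.tsum_eq_zero_add hsummf
    have hq1' : q - 1 ≠ 0 := by intro hc; nlinarith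
    calc φ r + ∑' l : ℕ, f l ≤ φ r + (q * φ r / 2 + φ r * q * (1 / (q - 1))) := by
          rw [hsplit]; linarith
      _ = φ r * (1 + q * (1 / 2 + 1 / (q - 1))) := by field_simp
  · have hkey : Real.sqrt (3 + 2 * Real.sqrt 2) = 1 + Real.sqrt 2 := by
      have : (3 + 2 * Real.sqrt 2) = (1 + Real.sqrt 2) ^ 2 := by nlinarith
      rw [this, Real.sqrt_sq (by positivity)]
    rw [hkey]
    have : (1 + Real.sqrt 2) - 1 = Real.sqrt 2 := by ring
    rw [this]
    field_simp
    nlinarith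
  · nlinarith
end
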